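/- The function F(t₁,t₂,t₃) = (1/2)t₃⁴ + (3/2)t₁t₂t₃ + (1/8)t₁³ + (1/16)t₂³/t₃ (the B₃¹ potential) satisfies the WDVV associativity equations on the domain t₃ ≠ 0, where the flat metric is Π_{ij} = ∂_{t₁}∂_{t_i}∂_{t_j}F (unity vector field e = ∂_{t₁}). -/

import Mathlib

/-!
Every term of `F` is a Laurent monomial `c * t₁^a * t₂^b * t₃^k` with `a, b ≥ 0`, so on `t₃ ≠ 0`
its partial derivatives are again such sums, obtained termwise by the power rule; this gives the
third derivatives `∂_i∂_j∂_l F` in closed form. The metric `Π = ∂₁∂_i∂_j F` is the constant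
matrix `[[3/4,0,0],[0,0,3/2],[0,3/2,0]]` with inverse `[[4/3,0,0],[0,0,2/3],[0,2/3,0]]`, and the
WDVV equations become rational identities in `t₂, t₃`, checked one index tuple at a time.
-/

/-- Partial derivative of a function of `n` real variables. -/
noncomputable def pd {n : ℕ} (i : Fin n) (f : (Fin n → ℝ) → ℝ) : (Fin n → ℝ) → ℝ :=
  fun t => deriv (fun s => f (Function.update t i s)) (t i)

open Filter Topology Set

theorem Filter.EventuallyEq.pd_eq {n : ℕ} {f g : (Fin n → ℝ) → ℝ} {t : Fin n → ℝ}
    (h : f =ᶠ[𝓝 t] g) (i : Fin n) : pd i f t = pd i g t := by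
  have hline : Tendsto (fun s => Function.update t i s) (𝓝 (t i)) (𝓝 t) := by
    simpa using ((continuous_const.update i continuous_id :
      Continuous fun s : ℝ => Function.update t i s)).tendsto (t i)
  exact (h.comp_tendsto hline).deriv_eq

/-- A Laurent polynomial as a list of terms `(c, e)`, each standing for `c * ∏ j, u j ^ e j`. -/
abbrev LaurentTerms (n : ℕ) := List (ℝ × (Fin n → ℤ))

namespace LaurentTerms

variable {n : ℕ}

noncomputable def term (m : ℝ × (Fin n → ℤ)) (u : Fin n → ℝ) : ℝ := m.1 * ∏ j, u j ^ m.2 j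

noncomputable def eval (P : LaurentTerms n) (u : Fin n → ℝ) : ℝ := (P.map (term · u)).sum

def derivTerm (i : Fin n) (m : ℝ × (Fin n → ℤ)) : ℝ × (Fin n → ℤ) :=
  (m.1 * m.2 i, m.2 - Pi.single i 1)

def pderiv (i : Fin n) (P : LaurentTerms n) : LaurentTerms n := P.map (derivTerm i)

/-- No negative exponents outside `S`. Terms with coefficient `0` are exempt, since `derivTerm`
turns an exponent `0` into `-1` while making the coefficient `0`. -/
def PolynomialOutside (S : Finset (Fin n)) (P : LaurentTerms n) : Prop :=
  ∀ m ∈ P, ∀ j ∉ S, m.1 = 0 ∨ 0 ≤ m.2 j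

def domain (S : Finset (Fin n)) : Set (Fin n → ℝ) := {u | ∀ j ∈ S, u j ≠ 0}

theorem prod_zpow_update (u : Fin n → ℝ) (e : Fin n → ℤ) (i : Fin n) (s : ℝ) :
    ∏ j, Function.update u i s j ^ e j = s ^ e i * ∏ j ∈ {i}ᶜ, u j ^ e j := by
  rw [Fintype.prod_eq_mul_prod_compl i, Function.update_self]
  congr 1
  refine Finset.prod_congr rfl fun j hj => ?_
  rw [Function.update_of_ne (by simpa using hj)]

theorem prod_zpow_sub_single (u : Fin n → ℝ) (e : Fin n → ℤ) (i : Fin n) :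
    ∏ j, u j ^ (e - Pi.single i (1 : ℤ) : Fin n → ℤ) j =
      u i ^ (e i - 1) * ∏ j ∈ {i}ᶜ, u j ^ e j := by
  rw [Fintype.prod_eq_mul_prod_compl i]
  simp only [Pi.sub_apply, Pi.single_eq_same]
  congr 1
  refine Finset.prod_congr rfl fun j hj => ?_
  rw [Pi.single_eq_of_ne (by simpa using hj), sub_zero]

theorem hasDerivAt_term (m : ℝ × (Fin n → ℤ)) (u : Fin n → ℝ) (i : Fin n)
    (h : m.1 = 0 ∨ u i ≠ 0 ∨ 0 ≤ m.2 i) :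
    HasDerivAt (fun s => term m (Function.update u i s)) (term (derivTerm i m) u) (u i) := by
  rcases h with h | h
  · simpa [term, derivTerm, h] using hasDerivAt_const (u i) (0 : ℝ)
  have hline : (fun s => term m (Function.update u i s)) =
      fun s => (m.1 * ∏ j ∈ {i}ᶜ, u j ^ m.2 j) * s ^ m.2 i := by
    funext s
    simp only [term, prod_zpow_update]
    ring
  rw [hline]
  refine ((hasDerivAt_zpow (m.2 i) (u i) h).const_mul _).congr_deriv ?_
  simp only [term, derivTerm, prod_zpow_sub_single]
  ring

theorem hasDerivAt_eval (P : LaurentTerms n) (u : Fin n → ℝ) (i : Fin n)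
    (h : ∀ m ∈ P, m.1 = 0 ∨ u i ≠ 0 ∨ 0 ≤ m.2 i) :
    HasDerivAt (fun s => eval P (Function.update u i s)) (eval (pderiv i P) u) (u i) := by
  induction P with
  | nil => simpa [eval, pderiv] using hasDerivAt_const (u i) (0 : ℝ)
  | cons m P ih =>
    simp only [List.mem_cons, forall_eq_or_imp] at h
    simpa [eval, pderiv] using (hasDerivAt_term m u i h.1).fun_add (ih h.2)

theorem PolynomialOutside.pderiv {S : Finset (Fin n)} {P : LaurentTerms n}
    (hP : P.PolynomialOutside S) (i : Fin n) : (P.pderiv i).PolynomialOutside S := by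
  simp only [PolynomialOutside, LaurentTerms.pderiv, List.mem_map, derivTerm]
  rintro _ ⟨m, hm, rfl⟩ j hj
  rcases hP m hm j hj with h | h
  · simp [h]
  rcases eq_or_ne j i with rfl | hji
  · rcases h.eq_or_lt with h | h
    · simp [← h]
    · exact Or.inr (by simp; omega)
  · right; simpa [Pi.single_eq_of_ne hji] using h

theorem eventually_mem_domain (S : Finset (Fin n)) {u : Fin n → ℝ} (hu : u ∈ domain S) :
    ∀ᶠ v in 𝓝 u, v ∈ domain S :=
  (Filter.eventually_all_finset S).2 fun j hj =>
    (continuous_apply j).continuousAt.eventually_ne (hu j hj)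

theorem pd_eval {S : Finset (Fin n)} {P : LaurentTerms n} (hP : P.PolynomialOutside S)
    {u : Fin n → ℝ} (hu : u ∈ domain S) (i : Fin n) : pd i (eval P) u = eval (pderiv i P) u := by
  refine (hasDerivAt_eval P u i fun m hm => ?_).deriv
  by_cases hi : i ∈ S
  · exact Or.inr (Or.inl (hu i hi))
  · exact (hP m hm i hi).imp_right Or.inr

theorem eqOn_pd {S : Finset (Fin n)} {P : LaurentTerms n} (hP : P.PolynomialOutside S)
    {f : (Fin n → ℝ) → ℝ} (hf : EqOn f (eval P) (domain S)) (i : Fin n) :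
    EqOn (pd i f) (eval (pderiv i P)) (domain S) := fun u hu => by
  rw [← pd_eval hP hu i]
  exact Filter.EventuallyEq.pd_eq ((eventually_mem_domain S hu).mono fun v hv => hf hv) i

end LaurentTerms

/-- The WDVV equations for structure constants `c`; `η` is the inverse metric. -/
def SatisfiesWDVV {n : ℕ} (c : Fin n → Fin n → Fin n → ℝ) (η : Matrix (Fin n) (Fin n) ℝ) : Prop :=
  ∀ i j q k, ∑ l, ∑ p, c i j l * η l p * c p q k = ∑ l, ∑ p, c k j l * η l p * c p q i

open LaurentTerms

noncomputable def b3Potential : LaurentTerms 3 :=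
  [(1 / 2, ![0, 0, 4]), (3 / 2, ![1, 1, 1]), (1 / 8, ![3, 0, 0]), (1 / 16, ![0, 3, -1])]

noncomputable def b3Tensor (t : Fin 3 → ℝ) : Fin 3 → Fin 3 → Fin 3 → ℝ :=
  let a := 3 / (8 * t 2)
  let b := -3 * t 1 / (8 * t 2 ^ 2)
  let c := 3 * t 1 ^ 2 / (8 * t 2 ^ 3)
  let d := 12 * t 2 - 3 * t 1 ^ 3 / (8 * t 2 ^ 4)
  ![![![3 / 4, 0, 0], ![0, 0, 3 / 2], ![0, 3 / 2, 0]],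
    ![![0, 0, 3 / 2], ![0, a, b], ![3 / 2, b, c]],
    ![![0, 3 / 2, 0], ![3 / 2, b, c], ![0, c, d]]]

theorem b3Potential_polynomialOutside : b3Potential.PolynomialOutside {2} := by
  intro m hm j hj
  simp only [b3Potential, List.mem_cons, List.not_mem_nil, or_false] at hm
  rw [Finset.mem_singleton] at hj
  rcases hm with rfl | rfl | rfl | rfl <;> fin_cases j <;> simp_all

theorem eval_b3Potential (t : Fin 3 → ℝ) (ht : t 2 ≠ 0) :
    eval b3Potential t = (1 / 2) * (t 2) ^ 4 + (3 / 2) * t 0 * t 1 * t 2 +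
      (1 / 8) * (t 0) ^ 3 + (1 / 16) * (t 1) ^ 3 / t 2 := by
  simp [eval, term, b3Potential, Fin.prod_univ_three]
  field_simp
  ring

theorem eval_pderiv_pderiv_pderiv_b3Potential (t : Fin 3 → ℝ) (ht : t 2 ≠ 0) (i j l : Fin 3) :
    eval (pderiv i (pderiv j (pderiv l b3Potential))) t = b3Tensor t i j l := by
  fin_cases i <;> fin_cases j <;> fin_cases l <;>
    simp only [eval, term, pderiv, derivTerm, b3Potential, List.map_cons, List.map_nil,
      List.sum_cons, List.sum_nil, Fin.prod_univ_three, Pi.sub_apply, Pi.single_apply] <;>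
    simp [b3Tensor] <;> field_simp <;> ring

theorem inv_metric_b3Tensor (t : Fin 3 → ℝ) :
    (Matrix.of fun a b => b3Tensor t 0 a b)⁻¹ = !![4 / 3, 0, 0; 0, 0, 2 / 3; 0, 2 / 3, 0] := by
  refine Matrix.inv_eq_right_inv ?_
  ext a b
  fin_cases a <;> fin_cases b <;> simp [b3Tensor, Matrix.mul_apply, Fin.sum_univ_three]

theorem b3Tensor_satisfiesWDVV (t : Fin 3 → ℝ) (ht : t 2 ≠ 0) :
    SatisfiesWDVV (b3Tensor t) (Matrix.of fun a b => b3Tensor t 0 a b)⁻¹ := by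
  intro i j q k
  rw [inv_metric_b3Tensor]
  fin_cases i <;> fin_cases j <;> fin_cases q <;> fin_cases k <;>
    simp [b3Tensor, Fin.sum_univ_three] <;> field_simp <;> ring

/-- The B₃¹ potential `F = (1/2)t₃⁴ + (3/2)t₁t₂t₃ + (1/8)t₁³ + (1/16)t₂³/t₃`
satisfies the WDVV equations on `t₃ ≠ 0`, where the flat metric is
`Π_{ij} = ∂₁∂_i∂_j F` (unity vector field `e = ∂₁`). -/
theorem stmt_15 (F : (Fin 3 → ℝ) → ℝ)
    (hF : ∀ t : Fin 3 → ℝ, t 2 ≠ 0 → F t = (1 / 2) * (t 2) ^ 4 + (3 / 2) * t 0 * t 1 * t 2 +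
      (1 / 8) * (t 0) ^ 3 + (1 / 16) * (t 1) ^ 3 / t 2) :
    ∀ t : Fin 3 → ℝ, t 2 ≠ 0 →
      ∀ i j q n : Fin 3,
        (∑ l : Fin 3, ∑ p : Fin 3,
          pd i (pd j (pd l F)) t *
            (Matrix.of fun a b : Fin 3 => pd 0 (pd a (pd b F)) t)⁻¹ l p *
              pd p (pd q (pd n F)) t) =
        (∑ l : Fin 3, ∑ p : Fin 3,
          pd n (pd j (pd l F)) t *
            (Matrix.of fun a b : Fin 3 => pd 0 (pd a (pd b F)) t)⁻¹ l p *
              pd p (pd q (pd i F)) t) := by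
  intro t ht
  have hP := b3Potential_polynomialOutside
  have hFP : EqOn F (eval b3Potential) (domain {2}) := fun u hu => by
    have hu2 : u 2 ≠ 0 := by simpa [domain] using hu
    rw [hF u hu2, eval_b3Potential u hu2]
  have hthird (i j l : Fin 3) : pd i (pd j (pd l F)) t = b3Tensor t i j l := by
    rw [← eval_pderiv_pderiv_pderiv_b3Potential t ht]
    exact eqOn_pd ((hP.pderiv l).pderiv j) (eqOn_pd (hP.pderiv l) (eqOn_pd hP hFP l) j) i
      (by simpa [domain] using ht)
  simp only [hthird]
  exact b3Tensor_satisfiesWDVV t ht
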